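/- Suppose n = k·p is a (b,P,Q)-challenge pseudoprime, p prime, and let L = lcm of the multiplicative orders ℓ_b(q) over primes q | k, and W = lcm of the ranks of apparition ω(q) over primes q | k. Then k·p ≡ 1 (mod L) and k·p ≡ -1 (mod W); equivalently p ≡ k⁻¹ (mod L) and p ≡ -k⁻¹ (mod W). -/
import Mathlib


/-- The Lucas sequence `U` with parameters `(P, Q)`. -/
def lucasU (P Q : ℤ) : ℕ → ℤ
  | 0 => 0
  | 1 => 1
  | (n + 2) => P * lucasU P Q (n + 1) - Q * lucasU P Q n

/-- The rank of apparition of `p` for the Lucas sequence with parameters `(P, Q)`. -/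
noncomputable def rankApp (P Q : ℤ) (p : ℕ) : ℕ :=
  sInf {m : ℕ | 0 < m ∧ (p : ℤ) ∣ lucasU P Q m}

lemma lucasU_rec (P Q : ℤ) (n : ℕ) :
    lucasU P Q (n + 2) = P * lucasU P Q (n + 1) - Q * lucasU P Q n := rfl

lemma lucasU_add (P Q : ℤ) : ∀ n m, lucasU P Q (m + n + 1) =
    lucasU P Q (m + 1) * lucasU P Q (n + 1) - Q * (lucasU P Q m * lucasU P Q n) := by
  intro n
  induction n using Nat.strong_induction_on with
  | _ n ih =>
    match n with
    | 0 => intro m; simp [lucasU]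
    | 1 =>
      intro m
      have : m + 1 + 1 = m + 2 := by omega
      rw [this, lucasU_rec]
      simp [lucasU]; ring
    | (n + 2) =>
      intro m
      have e1 := ih n (by omega) m
      have e2 := ih (n + 1) (by omega) m
      have h3 : m + (n + 2) + 1 = (m + n + 1) + 2 := by omega
      have h4 : m + (n + 1) + 1 = (m + n + 1) + 1 := by omega
      have h5 : m + n + 1 + 1 = m + n + 2 := by omega
      have e3 := lucasU_rec P Q n
      rw [h3, lucasU_rec, show n+2+1 = n+1+2 from rfl, lucasU_rec P Q (n+1)]
      rw [h4, show n+1+1 = n+2 from rfl] at e2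
      linear_combination P * e2 - Q * e1 + Q * lucasU P Q m * e3

lemma lucasU_no_consec {P Q : ℤ} {q : ℕ} (hq : q.Prime) (hQ : ¬ (q : ℤ) ∣ Q) :
    ∀ m, (q : ℤ) ∣ lucasU P Q m → (q : ℤ) ∣ lucasU P Q (m + 1) → False := by
  intro m
  induction m with
  | zero =>
    intro _ h1
    have h1' : (q : ℤ) ∣ 1 := by simpa [lucasU] using h1
    have := Int.le_of_dvd one_pos h1'
    have := hq.two_le
    omega
  | succ m ih =>
    intro h1 h2
    rw [show m + 1 + 1 = m + 2 from rfl, lucasU_rec] at h2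
    have hqp : Prime (q : ℤ) := Nat.prime_iff_prime_int.mp hq
    have : (q : ℤ) ∣ Q * lucasU P Q m := by
      have := dvd_sub (Dvd.dvd.mul_left h1 P) h2
      simpa using this
    rcases hqp.dvd_mul.mp this with h | h
    · exact hQ h
    · exact ih h h1

lemma rankApp_dvd {P Q : ℤ} {q : ℕ} (hq : q.Prime) (hQ : ¬ (q : ℤ) ∣ Q) :
    ∀ m, (q : ℤ) ∣ lucasU P Q m → rankApp P Q q ∣ m := by
  intro m
  induction m using Nat.strong_induction_on with
  | _ m ih =>
    intro hm
    rcases Nat.eq_zero_or_pos m with rfl | hm0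
    · exact dvd_zero _
    have hne : {m : ℕ | 0 < m ∧ (q : ℤ) ∣ lucasU P Q m}.Nonempty := ⟨m, hm0, hm⟩
    have hmem := Nat.sInf_mem hne
    set ω := rankApp P Q q with hωdef
    have hωmem : 0 < ω ∧ (q : ℤ) ∣ lucasU P Q ω := hmem
    have hω1 : 0 < ω := hωmem.1
    rcases lt_or_ge m ω with hlt | hle
    · have hle' : ω ≤ m :=
        Nat.sInf_le (show m ∈ {m : ℕ | 0 < m ∧ (q : ℤ) ∣ lucasU P Q m} from ⟨hm0, hm⟩)
      omega
    · -- q ∣ lucasU (m - ω); use lucasU_add with a = m - ω, b = ω - 1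
      have hex : ∃ ω', ω = ω' + 1 := ⟨ω - 1, (Nat.succ_pred_eq_of_pos hω1).symm⟩
      obtain ⟨ω', hω'⟩ := hex
      have hadd := lucasU_add P Q ω' (m - ω)
      have heq : m - ω + ω' + 1 = m := by omega
      rw [heq] at hadd
      have hqp : Prime (q : ℤ) := Nat.prime_iff_prime_int.mp hq
      have hdvd2 : (q : ℤ) ∣ Q * (lucasU P Q (m - ω) * lucasU P Q ω') := by
        have h1 : (q : ℤ) ∣ lucasU P Q (m - ω + 1) * lucasU P Q (ω' + 1) := by
          rw [← hω']; exact Dvd.dvd.mul_left hωmem.2 _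
        have := dvd_sub h1 (hadd ▸ hm)
        simpa using this
      have hdvd3 : (q : ℤ) ∣ lucasU P Q (m - ω) := by
        rcases hqp.dvd_mul.mp hdvd2 with h | h
        · exact absurd h hQ
        rcases hqp.dvd_mul.mp h with h | h
        · exact h
        · exact (lucasU_no_consec hq hQ ω' h (hω' ▸ hωmem.2)).elim
      have := ih (m - ω) (by omega) hdvd3
      have : ω ∣ m - ω + ω := Dvd.dvd.add this dvd_rfl
      rwa [Nat.sub_add_cancel hle] at this

/-- A `(b, P, Q)`-challenge pseudoprime. -/
def IsChallengePsp (b : ℕ) (P Q : ℤ) (n : ℕ) : Prop :=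
  1 < n ∧ ¬ n.Prime ∧
  Nat.Coprime n b ∧ Int.gcd (n : ℤ) (2 * Q * (P ^ 2 - 4 * Q)) = 1 ∧
  b ^ (n - 1) ≡ 1 [MOD n] ∧
  jacobiSym (P ^ 2 - 4 * Q) n = -1 ∧
  (n : ℤ) ∣ lucasU P Q (n + 1)

theorem challenge_psp_sieve_congruences
    (b : ℕ) (P Q : ℤ) (n k p : ℕ) (hp : p.Prime) (hk : 0 < k)
    (hn : n = k * p)
    (hpsp : IsChallengePsp b P Q n)
    (L W : ℕ)
    (hL : L = k.primeFactors.lcm (fun q => orderOf (b : ZMod q)))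
    (hW : W = k.primeFactors.lcm (fun q => rankApp P Q q)) :
    k * p ≡ 1 [MOD L] ∧ ((k : ℤ) * p) ≡ -1 [ZMOD (W : ℤ)] := by
  obtain ⟨hn1, hnp, hcop, hgcd, hb, hjac, hU⟩ := hpsp
  have hkdvd : k ∣ n := ⟨p, hn⟩
  constructor
  · have hLd : L ∣ n - 1 := by
      rw [hL]
      apply Finset.lcm_dvd
      intro q hq
      have hqprime : q.Prime := Nat.prime_of_mem_primeFactors hq
      have hqn : q ∣ n := (Nat.dvd_of_mem_primeFactors hq).trans hkdvd
      have hbq : b ^ (n - 1) ≡ 1 [MOD q] := hb.of_dvd hqn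
      have hpow : (b : ZMod q) ^ (n - 1) = 1 := by
        have := (ZMod.natCast_eq_natCast_iff _ _ _).mpr hbq
        push_cast at this
        simpa using this
      exact orderOf_dvd_of_pow_eq_one hpow
    have h1 : 1 ≡ n [MOD L] := (Nat.modEq_iff_dvd' (by omega)).mpr hLd
    rw [hn] at h1
    exact h1.symm
  · have hWd : W ∣ n + 1 := by
      rw [hW]
      apply Finset.lcm_dvd
      intro q hq
      have hqprime : q.Prime := Nat.prime_of_mem_primeFactors hq
      have hqn : q ∣ n := (Nat.dvd_of_mem_primeFactors hq).trans hkdvd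
      have hQ : ¬ (q : ℤ) ∣ Q := by
        intro hdQ
        have hco : IsCoprime (n : ℤ) (2 * Q * (P ^ 2 - 4 * Q)) :=
          Int.isCoprime_iff_gcd_eq_one.mpr hgcd
        have h1 : (q : ℤ) ∣ (n : ℤ) := Int.natCast_dvd_natCast.mpr hqn
        have h2 : (q : ℤ) ∣ 2 * Q * (P ^ 2 - 4 * Q) :=
          Dvd.dvd.mul_right (Dvd.dvd.mul_left hdQ 2) _
        have hu := hco.isUnit_of_dvd' h1 h2
        rw [Int.isUnit_iff] at hu
        have := hqprime.two_le
        omega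
      have hqU : (q : ℤ) ∣ lucasU P Q (n + 1) := (Int.natCast_dvd_natCast.mpr hqn).trans hU
      exact rankApp_dvd hqprime hQ (n + 1) hqU
    have hcast : (W : ℤ) ∣ (n : ℤ) + 1 := by exact_mod_cast Int.natCast_dvd_natCast.mpr hWd
    have hn' : ((k : ℤ) * p) = (n : ℤ) := by rw [hn]; push_cast; ring
    rw [hn']
    refine Int.modEq_iff_dvd.mpr ?_
    rw [show (-1 : ℤ) - (n : ℤ) = -((n : ℤ) + 1) from by ring]
    exact dvd_neg.mpr hcast
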